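/- Let $R$ be the $p\times p$ equicorrelation matrix with correlation $\rho \in (-1/(p-1), 1)$ and let $\delta = a\mathbf{1}$ for some constant $a$ (all effect sizes equal). Then for each $k$, $\beta(\delta, R)_k = \sqrt{1-\rho}\,\beta(\delta, I)_k$, where $\beta(\delta, \Sigma)_k$ denotes the frequentist selection bias of the $k$-th order statistic under $N(\delta, \Sigma)$. -/

import Mathlib

/-!
The equicorrelation matrix factors as `B Bᵀ` with the symmetric square root
`B = √(1-ρ) I + t J` (`J` the all-ones matrix). Any other factor `L` of it equals `B O` with `O`
orthogonal, and `O` leaves the standard Gaussian invariant, so the law of `a + L Z` is that of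
`a + √(1-ρ) Z + t (∑ Zᵢ) 1`. Order statistics commute with the monotone map
`x ↦ a + √(1-ρ) x + t ∑ Zᵢ`, and `∑ Zᵢ` has mean zero, so the bias is `√(1-ρ) E[Z₍ₖ₎]`;
at `ρ = 0` this is the bias under the identity covariance.
-/

open MeasureTheory ProbabilityTheory Filter Real

noncomputable section

/-- The `k`-th order statistic of a vector `v`. -/
def orderStat {n : ℕ} (v : Fin n → ℝ) (k : Fin n) : ℝ := v (Tuple.sort v k)

/-- The (random) index of the `k`-th order statistic of `v`. -/
def ordIdx {n : ℕ} (v : Fin n → ℝ) (k : Fin n) : Fin n := Tuple.sort v k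

/-- Product of i.i.d. standard Gaussians on `Fin n → ℝ`. -/
def stdGaussianPi (n : ℕ) : Measure (Fin n → ℝ) := Measure.pi fun _ => gaussianReal 0 1

/-- `μ` is a multivariate Gaussian with mean `δ` and covariance `S`. -/
def IsMvGaussian {n : ℕ} (μ : Measure (Fin n → ℝ)) (δ : Fin n → ℝ)
    (S : Matrix (Fin n) (Fin n) ℝ) : Prop :=
  ∃ L : Matrix (Fin n) (Fin n) ℝ, L * L.transpose = S ∧
    μ = (stdGaussianPi n).map (fun z j => δ j + ∑ i, L j i * z i)

/-- Frequentist selection bias of the `k`-th order statistic under distribution `μ`. -/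
def biasM {n : ℕ} (μ : Measure (Fin n → ℝ)) (δ : Fin n → ℝ) (k : Fin n) : ℝ :=
  ∫ v, (orderStat v k - δ (ordIdx v k)) ∂μ

/-- The equicorrelation matrix: unit diagonal, off-diagonal entries `ρ`. -/
def equicor (n : ℕ) (ρ : ℝ) : Matrix (Fin n) (Fin n) ℝ := fun i j => if i = j then 1 else ρ

open Matrix WithLp Finset

lemma orderStat_comp_of_monotone {n : ℕ} {f : ℝ → ℝ} (hf : Monotone f) (v : Fin n → ℝ)
    (k : Fin n) : orderStat (f ∘ v) k = f (orderStat v k) := by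
  have h := (Tuple.comp_sort_eq_comp_iff_monotone (f := f ∘ v) (σ := Tuple.sort v)).mpr
    (hf.comp (Tuple.monotone_sort v))
  exact congrFun h.symm k

lemma orderStat_le_iff {n : ℕ} (v : Fin n → ℝ) (k : Fin n) (t : ℝ) :
    orderStat v k ≤ t ↔ (k : ℕ) < #{i | v i ≤ t} := by
  rw [orderStat, ← Function.comp_apply (f := v),
    ← Tuple.lt_card_le_iff_apply_le_of_monotone (Tuple.monotone_sort v)]
  simp only [Function.comp_apply]
  rw [card_equiv (Tuple.sort v) (t := ({i | v i ≤ t} : Finset (Fin n))) (by simp)]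

lemma measurable_orderStat {n : ℕ} (k : Fin n) :
    Measurable fun v : Fin n → ℝ => orderStat v k := by
  refine measurable_of_Iic fun t => ?_
  have hcard : Measurable fun v : Fin n → ℝ => #{i | v i ≤ t} := by
    simp_rw [card_filter]
    exact Finset.measurable_sum _ fun i _ => Measurable.ite
      (measurableSet_le (measurable_pi_apply i) measurable_const) measurable_const measurable_const
  simp only [Set.preimage, Set.mem_Iic, orderStat_le_iff]
  exact measurableSet_lt measurable_const hcard

lemma abs_orderStat_le {n : ℕ} (v : Fin n → ℝ) (k : Fin n) :
    |orderStat v k| ≤ ∑ i, |v i| :=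
  single_le_sum (f := fun i => |v i|) (fun i _ => abs_nonneg (v i)) (mem_univ _)

lemma stdGaussianPi_eq_map_ofLp (n : ℕ) :
    stdGaussianPi n = (stdGaussian (EuclideanSpace ℝ (Fin n))).map ofLp := by
  rw [← map_pi_eq_stdGaussian, Measure.map_map (by fun_prop) (by fun_prop)]
  exact Measure.map_id.symm

lemma map_mulVec_stdGaussianPi {n : ℕ} {O : Matrix (Fin n) (Fin n) ℝ}
    (hO : O ∈ orthogonalGroup (Fin n) ℝ) :
    (stdGaussianPi n).map (O *ᵥ ·) = stdGaussianPi n := by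
  let U : unitary (EuclideanSpace ℝ (Fin n) →L[ℝ] EuclideanSpace ℝ (Fin n)) :=
    ⟨toEuclideanCLM (𝕜 := ℝ) (n := Fin n) O, Unitary.map_mem _ hO⟩
  have hcomp : (O *ᵥ ·) ∘ ofLp = ofLp ∘ Unitary.linearIsometryEquiv U := rfl
  rw [stdGaussianPi_eq_map_ofLp, Measure.map_map (by fun_prop) (by fun_prop), hcomp,
    ← Measure.map_map (by fun_prop) (by fun_prop), stdGaussian_map]

lemma integral_eval_stdGaussianPi {n : ℕ} (i : Fin n) :
    ∫ z, z i ∂stdGaussianPi n = 0 := by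
  rw [stdGaussianPi, integral_eval, integral_id_gaussianReal]

lemma integrable_eval_stdGaussianPi {n : ℕ} (i : Fin n) :
    Integrable (fun z : Fin n → ℝ => z i) (stdGaussianPi n) :=
  integrable_eval IsGaussian.integrable_id

lemma exists_mem_orthogonalGroup_of_mul_transpose_eq {ι R : Type*} [Fintype ι] [DecidableEq ι]
    [CommRing R] {L B : Matrix ι ι R} (hB : IsUnit B.det) (h : L * Lᵀ = B * Bᵀ) :
    ∃ O ∈ orthogonalGroup ι R, L = B * O := by
  refine ⟨B⁻¹ * L, ?_, by rw [← Matrix.mul_assoc, mul_nonsing_inv _ hB, Matrix.one_mul]⟩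
  rw [mem_orthogonalGroup_iff, transpose_mul, Matrix.mul_assoc, ← Matrix.mul_assoc L, h,
    transpose_nonsing_inv, ← Matrix.mul_assoc, ← Matrix.mul_assoc, nonsing_inv_mul _ hB,
    Matrix.one_mul, mul_nonsing_inv _ (by rwa [det_transpose])]

section SmulOneAddSmulOnes

variable {ι R : Type*} [DecidableEq ι] [CommRing R]

lemma transpose_smul_one_add_smul_ones (a b : R) :
    (a • 1 + b • of fun _ _ => 1 : Matrix ι ι R)ᵀ = a • 1 + b • of fun _ _ => 1 := by
  ext i j
  simp [one_apply, eq_comm]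

variable [Fintype ι]

lemma smul_one_add_smul_ones_mul (a b c d : R) :
    (a • 1 + b • of fun _ _ => 1 : Matrix ι ι R) * (c • 1 + d • of fun _ _ => 1)
      = (a * c) • 1 + (a * d + b * c + Fintype.card ι * b * d) • of fun _ _ => 1 := by
  have hJJ : (of fun _ _ => 1 : Matrix ι ι R) * (of fun _ _ => 1) =
      (Fintype.card ι : R) • of fun _ _ => 1 := by
    ext i j
    simp [mul_apply]
  simp only [add_mul, mul_add, Matrix.smul_mul, Matrix.mul_smul, smul_smul, Matrix.one_mul,
    Matrix.mul_one, hJJ]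
  module

lemma sum_smul_one_add_smul_ones_apply_mul (a b : R) (z : ι → R) (j : ι) :
    ∑ i, (a • 1 + b • of fun _ _ => 1 : Matrix ι ι R) j i * z i = a * z j + b * ∑ i, z i := by
  simp [add_mul, Finset.sum_add_distrib, one_apply, Finset.mul_sum]

end SmulOneAddSmulOnes

lemma equicor_eq_smul_one_add_smul_ones (n : ℕ) (ρ : ℝ) :
    equicor n ρ = (1 - ρ) • 1 + ρ • of fun _ _ => 1 := by
  ext i j
  by_cases h : i = j <;> simp [equicor, one_apply, h]

lemma equicor_zero (n : ℕ) : equicor n 0 = 1 := by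
  ext i j
  simp [equicor, one_apply]

-- `t` is chosen so that `√(1-ρ) + n t = √(1 + (n-1)ρ)`, the eigenvalue on the all-ones vector.
def equicorSqrt (n : ℕ) (ρ : ℝ) : Matrix (Fin n) (Fin n) ℝ :=
  √(1 - ρ) • 1 + ((√(1 + (n - 1) * ρ) - √(1 - ρ)) / n) • of fun _ _ => 1

lemma equicorSqrt_mul_transpose {n : ℕ} {ρ : ℝ} (hρ1 : ρ ≤ 1) (hρ2 : 0 ≤ 1 + (n - 1) * ρ) :
    equicorSqrt n ρ * (equicorSqrt n ρ)ᵀ = equicor n ρ := by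
  obtain rfl | hn := eq_or_ne n 0
  · exact Subsingleton.elim _ _
  have hs := Real.mul_self_sqrt (sub_nonneg.mpr hρ1)
  have hu := Real.mul_self_sqrt hρ2
  rw [equicorSqrt, transpose_smul_one_add_smul_ones, smul_one_add_smul_ones_mul,
    equicor_eq_smul_one_add_smul_ones, Fintype.card_fin, hs]
  generalize √(1 - ρ) = s at *
  generalize √(1 + (n - 1) * ρ) = u at *
  congr 2
  field_simp
  linear_combination hu - hs

lemma isUnit_det_equicorSqrt {n : ℕ} {ρ : ℝ} (hρ1 : ρ < 1) (hρ2 : 0 < 1 + (n - 1) * ρ) :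
    IsUnit (equicorSqrt n ρ).det := by
  obtain rfl | hn := eq_or_ne n 0
  · simp
  have hs := Real.sqrt_pos.mpr (sub_pos.mpr hρ1)
  have hu := Real.sqrt_pos.mpr hρ2
  unfold equicorSqrt
  generalize √(1 - ρ) = s at *
  generalize √(1 + (n - 1) * ρ) = u at *
  refine isUnit_det_of_right_inverse
    (B := s⁻¹ • 1 + ((u⁻¹ - s⁻¹) / n) • of fun _ _ => 1) ?_
  have hcoef : s * ((u⁻¹ - s⁻¹) / n) + (u - s) / n * s⁻¹ + n * ((u - s) / n) * ((u⁻¹ - s⁻¹) / n)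
      = 0 := by
    field_simp
    ring
  rw [smul_one_add_smul_ones_mul, Fintype.card_fin, mul_inv_cancel₀ hs.ne', hcoef, one_smul,
    zero_smul, add_zero]

lemma IsMvGaussian.eq_map_of_eq_mul_transpose {n : ℕ} {μ : Measure (Fin n → ℝ)} {δ : Fin n → ℝ}
    {B : Matrix (Fin n) (Fin n) ℝ} (hμ : IsMvGaussian μ δ (B * Bᵀ)) (hB : IsUnit B.det) :
    μ = (stdGaussianPi n).map fun z j => δ j + ∑ i, B j i * z i := by
  obtain ⟨L, hL, rfl⟩ := hμ
  obtain ⟨O, hO, rfl⟩ := exists_mem_orthogonalGroup_of_mul_transpose_eq hB hL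
  have hcomp : (fun z j => δ j + ∑ i, (B * O) j i * z i)
      = (fun z j => δ j + ∑ i, B j i * z i) ∘ (O *ᵥ ·) := by
    funext z j
    change δ j + ((B * O) *ᵥ z) j = δ j + (B *ᵥ (O *ᵥ z)) j
    rw [mulVec_mulVec]
  rw [hcomp, ← Measure.map_map (by fun_prop) (by fun_prop), map_mulVec_stdGaussianPi hO]

lemma integrable_orderStat_stdGaussianPi {n : ℕ} (k : Fin n) :
    Integrable (fun z => orderStat z k) (stdGaussianPi n) :=
  Integrable.mono' (integrable_finsetSum _ fun i _ => (integrable_eval_stdGaussianPi i).abs)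
    (measurable_orderStat k).aestronglyMeasurable
    (ae_of_all _ fun z => by simpa using abs_orderStat_le z k)

lemma biasM_map_stdGaussianPi {n : ℕ} (a s t : ℝ) (hs : 0 ≤ s) (k : Fin n) :
    biasM ((stdGaussianPi n).map fun z j => a + (s * z j + t * ∑ i, z i)) (fun _ => a) k
      = s * ∫ z, orderStat z k ∂stdGaussianPi n := by
  have hpt (z : Fin n → ℝ) :
      orderStat (fun j => a + (s * z j + t * ∑ i, z i)) k - a
        = s * orderStat z k + t * ∑ i, z i := by
    rw [show (fun j => a + (s * z j + t * ∑ i, z i)) = (fun x => a + (s * x + t * ∑ i, z i)) ∘ z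
      from rfl, orderStat_comp_of_monotone (fun x y hxy => by gcongr)]
    ring
  rw [biasM, integral_map (by fun_prop) ((measurable_orderStat k).sub_const a).aestronglyMeasurable]
  simp_rw [hpt]
  rw [integral_add ((integrable_orderStat_stdGaussianPi k).const_mul s)
      ((integrable_finsetSum _ fun i _ => integrable_eval_stdGaussianPi i).const_mul t),
    integral_const_mul, integral_const_mul,
    integral_finsetSum _ fun i _ => integrable_eval_stdGaussianPi i]
  simp [integral_eval_stdGaussianPi]

lemma biasM_of_isMvGaussian_equicor {n : ℕ} {ρ a : ℝ} (hρ1 : ρ < 1) (hρ2 : 0 < 1 + (n - 1) * ρ)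
    {μ : Measure (Fin n → ℝ)} (hμ : IsMvGaussian μ (fun _ => a) (equicor n ρ)) (k : Fin n) :
    biasM μ (fun _ => a) k = √(1 - ρ) * ∫ z, orderStat z k ∂stdGaussianPi n := by
  rw [← equicorSqrt_mul_transpose hρ1.le hρ2.le] at hμ
  rw [hμ.eq_map_of_eq_mul_transpose (isUnit_det_equicorSqrt hρ1 hρ2), equicorSqrt]
  simp_rw [sum_smul_one_add_smul_ones_apply_mul]
  exact biasM_map_stdGaussianPi _ _ _ (Real.sqrt_nonneg _) k

/-- With equal effect sizes `δ = a 1`, the selection bias under equicorrelation `ρ` is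
`√(1-ρ)` times the bias under independence. -/
theorem stmt2 {p : ℕ} (hp : 2 ≤ p) (ρ a : ℝ)
    (hρ1 : -(1 / ((p : ℝ) - 1)) < ρ) (hρ2 : ρ < 1)
    (μ ν : Measure (Fin p → ℝ))
    (hμ : IsMvGaussian μ (fun _ => a) (equicor p ρ))
    (hν : IsMvGaussian ν (fun _ => a) (1 : Matrix (Fin p) (Fin p) ℝ)) :
    ∀ k, biasM μ (fun _ => a) k = Real.sqrt (1 - ρ) * biasM ν (fun _ => a) k := by
  intro k
  have hp1 : (0 : ℝ) < p - 1 := by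
    have : (2 : ℝ) ≤ p := by exact_mod_cast hp
    linarith
  have hρ : 0 < 1 + (p - 1) * ρ := by
    have := mul_lt_mul_of_pos_left hρ1 hp1
    rw [mul_neg, mul_one_div_cancel hp1.ne'] at this
    linarith
  rw [← equicor_zero] at hν
  rw [biasM_of_isMvGaussian_equicor hρ2 hρ hμ, biasM_of_isMvGaussian_equicor one_pos (by simp) hν,
    sub_zero, Real.sqrt_one, one_mul]
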